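/- Let A be a commutative ring which is a ℂ-algebra and let x, z ∈ A satisfy x·z = 0. Fix β, t ∈ ℂ and an integer N ≥ 1. Then the normalized Branson–Gover element factorizes as a product of 'second-order' factors: L̄_N = ∏_{l=1}^{N} ( (β/2+N−l+1)(β/2−N+l)·x + (β/2+N−l)(β/2−N+l−1)·z + (β/2−N+l−1)(β/2−N+l)(β/2+N−l)(β/2+N−l+1)·t ). -/

import Mathlib

/-
With `a_l = (β/2+N-l+1)(β/2-N+l)` and `b_l = (β/2+N-l)(β/2-N+l-1)`, the `l`-th factor is
`a_l x + b_l z + a_l b_l t`. Because `xz = 0`, a product of such factors splits as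
`∏ (a_l x + a_l b_l t) + (∏ (b_l z + a_l b_l t) - ∏ a_l b_l t)`.
The first product is `(∏ a_l) P_N` after the reflection `l ↦ N+1-l`, and `∏ a_l = (β/2-N+1)_{2N}`.
In the second, pulling out `∏ b_l = (β/2-N)_{2N}` leaves `∏ (z + a_l t) - ∏ a_l t`, whose expansion
in `z` is `Q_N`: its `j`-th term carries `∏_{l>j} a_l t = (β/2-N+j+1)_{2(N-j)} t^{N-j}`.
-/

open Finset

/-- Ascending Pochhammer symbol `(a)_k = ∏_{i=0}^{k-1} (a+i)`. -/
noncomputable def poch (a : ℂ) (k : ℕ) : ℂ := ∏ i ∈ Finset.range k, (a + i)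

/-- `P_N = ∏_{l=1}^N (x + (β/2+l-1)(β/2-l)·t)`, modelling `(2J/n)^N R_N(y^(+);0)`. -/
noncomputable def Ppoly {A : Type*} [CommRing A] [Algebra ℂ A] (x : A) (β t : ℂ) (N : ℕ) : A :=
  ∏ l ∈ Finset.Icc 1 N, (x + ((β/2 + (l:ℂ) - 1) * (β/2 - (l:ℂ)) * t) • (1 : A))

/-- `Q_N = ∑_{j=1}^N (β/2-N+j+1)_{2(N-j)} t^{N-j} z ∏_{l=1}^{j-1} (z + (β/2+N-l+1)(β/2-N+l)·t)`,
modelling `(2J/n)^N R^(1)_N(y^(1))`. -/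
noncomputable def Qpoly {A : Type*} [CommRing A] [Algebra ℂ A] (z : A) (β t : ℂ) (N : ℕ) : A :=
  ∑ j ∈ Finset.Icc 1 N,
    (poch (β/2 - (N:ℂ) + (j:ℂ) + 1) (2*(N-j)) * t^(N-j)) •
      (z * ∏ l ∈ Finset.Icc 1 (j-1), (z + ((β/2 + (N:ℂ) - (l:ℂ) + 1) * (β/2 - (N:ℂ) + (l:ℂ)) * t) • (1 : A)))

/-- Normalized Branson–Gover element `L̄_N = (β/2-N+1)_{2N}·P_N + (β/2-N)_{2N}·Q_N`. -/
noncomputable def Lbar {A : Type*} [CommRing A] [Algebra ℂ A] (x z : A) (β t : ℂ) (N : ℕ) : A :=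
  (poch (β/2 - (N:ℂ) + 1) (2*N)) • Ppoly x β t N + (poch (β/2 - (N:ℂ)) (2*N)) • Qpoly z β t N

/-- Branson–Gover element `L_N = (β/2+N)·P_N + (β/2-N)·Q_N`. -/
noncomputable def Lel {A : Type*} [CommRing A] [Algebra ℂ A] (x z : A) (β t : ℂ) (N : ℕ) : A :=
  ((β/2 + (N:ℂ)) • Ppoly x β t N) + ((β/2 - (N:ℂ)) • Qpoly z β t N)

namespace Finset

section SplitProduct

variable {ι R : Type*} [CommRing R] (s : Finset ι) (c : ι → R)

theorem mul_prod_add_of_mul_eq_zero {w : R} {v : ι → R} (hwv : ∀ i, w * v i = 0) :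
    w * ∏ i ∈ s, (v i + c i) = w * ∏ i ∈ s, c i := by
  induction s using Finset.cons_induction with
  | empty => rfl
  | cons i s hi ih =>
    rw [prod_cons, prod_cons]
    linear_combination (∏ j ∈ s, (v j + c j)) * hwv i + c i * ih

theorem prod_add_add_of_mul_eq_zero {u v : ι → R} (huv : ∀ i j, u i * v j = 0) :
    ∏ i ∈ s, (u i + v i + c i) = ∏ i ∈ s, (u i + c i) + (∏ i ∈ s, (v i + c i) - ∏ i ∈ s, c i) := by
  induction s using Finset.cons_induction with
  | empty => simp
  | cons i s hi ih =>
    have hu := mul_prod_add_of_mul_eq_zero s c (huv i)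
    have hv := mul_prod_add_of_mul_eq_zero s c (fun j => (mul_comm _ _).trans (huv j i))
    simp only [prod_cons, ih]
    linear_combination hu + hv

end SplitProduct

theorem prod_Icc_add_sub_prod {R : Type*} [CommRing R] (z : R) (w : ℕ → R) (N : ℕ) :
    ∏ l ∈ Icc 1 N, (z + w l) - ∏ l ∈ Icc 1 N, w l =
      ∑ j ∈ Icc 1 N, (∏ l ∈ Icc (j + 1) N, w l) * (z * ∏ l ∈ Icc 1 (j - 1), (z + w l)) := by
  simp_rw [add_comm z]
  rw [prod_add_ordered, add_sub_cancel_left]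
  refine sum_congr rfl fun j hj => ?_
  have hlt : {l ∈ Icc 1 N | l < j} = Icc 1 (j - 1) := by
    ext l; simp only [mem_filter, mem_Icc] at hj ⊢; omega
  have hgt : {l ∈ Icc 1 N | j < l} = Icc (j + 1) N := by
    ext l; simp only [mem_filter, mem_Icc]; omega
  rw [hlt, hgt]
  ring

theorem prod_Icc_reflect {M : Type*} [CommMonoid M] (f : ℕ → M) (m n : ℕ) :
    ∏ l ∈ Icc m n, f (m + n - l) = ∏ l ∈ Icc m n, f l :=
  prod_nbij' (fun l => m + n - l) (fun l => m + n - l)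
    (fun l hl => by simp only [mem_Icc] at hl ⊢; omega)
    (fun l hl => by simp only [mem_Icc] at hl ⊢; omega)
    (fun l hl => by simp only [mem_Icc] at hl; omega)
    (fun l hl => by simp only [mem_Icc] at hl; omega)
    (fun _ _ => rfl)

end Finset

theorem poch_add (a : ℂ) (m n : ℕ) : poch a (m + n) = poch a m * poch (a + m) n := by
  simp only [poch, prod_range_add, Nat.cast_add, add_assoc]

/-- The factors `u - N + l` run through `u - N + j + 1, …, u` and the factors `u + N - l + 1`
through `u + 1, …, u + N - j`: together, the `2 (N - j)` consecutive terms of the Pochhammer symbol. -/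
theorem prod_Icc_eq_poch (u : ℂ) {j N : ℕ} (hj : j ≤ N) :
    ∏ l ∈ Icc (j + 1) N, ((u + N - l + 1) * (u - N + l)) = poch (u - N + j + 1) (2 * (N - j)) := by
  rw [two_mul, poch_add, prod_mul_distrib, mul_comm, ← prod_Icc_reflect (fun l : ℕ => u + N - l + 1)]
  simp only [← Finset.Ico_add_one_right_eq_Icc, prod_Ico_eq_prod_range, poch]
  rw [show N + 1 - (j + 1) = N - j by omega]
  congr 1 <;> refine prod_congr rfl fun k hk => ?_
  · push_cast
    ring
  · have := mem_range.mp hk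
    rw [show j + 1 + N - (j + 1 + k) = N - k by omega, Nat.cast_sub (by omega : k ≤ N),
      Nat.cast_sub hj]
    ring

section BransonGover

variable {A : Type*} [CommRing A] [Algebra ℂ A]

theorem Ppoly_eq_prod_reflect (x : A) (β t : ℂ) (N : ℕ) :
    Ppoly x β t N = ∏ l ∈ Icc 1 N, (x + ((β/2 + N - l) * (β/2 - N + l - 1) * t) • (1 : A)) := by
  rw [Ppoly, ← prod_Icc_reflect _ 1 N]
  refine prod_congr rfl fun l hl => ?_
  have := (mem_Icc.mp hl).2
  rw [Nat.cast_sub (by omega), Nat.cast_add, Nat.cast_one]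
  congr 3
  ring

theorem prod_sub_prod_eq_Qpoly (z : A) (β t : ℂ) (N : ℕ) :
    ∏ l ∈ Icc 1 N, (z + ((β/2 + N - l + 1) * (β/2 - N + l) * t) • (1 : A))
      - ∏ l ∈ Icc 1 N, ((β/2 + N - l + 1) * (β/2 - N + l) * t) • (1 : A) = Qpoly z β t N := by
  rw [prod_Icc_add_sub_prod, Qpoly]
  refine sum_congr rfl fun j hj => ?_
  rw [prod_smul, prod_const_one, smul_one_mul, prod_mul_distrib, prod_const, Nat.card_Icc,
    Nat.add_sub_add_right, prod_Icc_eq_poch _ (mem_Icc.mp hj).2]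

end BransonGover

theorem Lbar_factorization_general {A : Type*} [CommRing A] [Algebra ℂ A] (x z : A) (hxz : x * z = 0)
    (β t : ℂ) (N : ℕ) :
    Lbar x z β t N =
      ∏ l ∈ Finset.Icc 1 N,
        (((β/2 + (N:ℂ) - (l:ℂ) + 1)*(β/2 - (N:ℂ) + (l:ℂ))) • x
          + ((β/2 + (N:ℂ) - (l:ℂ))*(β/2 - (N:ℂ) + (l:ℂ) - 1)) • z
          + ((β/2 - (N:ℂ) + (l:ℂ) - 1)*(β/2 - (N:ℂ) + (l:ℂ))*(β/2 + (N:ℂ) - (l:ℂ))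
              *(β/2 + (N:ℂ) - (l:ℂ) + 1)*t) • (1 : A)) := by
  set a : ℕ → ℂ := fun l => (β/2 + N - l + 1) * (β/2 - N + l)
  set b : ℕ → ℂ := fun l => (β/2 + N - l) * (β/2 - N + l - 1)
  have huv : ∀ i j, a i • x * b j • z = 0 := fun i j => by rw [smul_mul_smul_comm, hxz, smul_zero]
  have hpa : ∏ l ∈ Icc 1 N, a l = poch (β/2 - N + 1) (2 * N) := by
    simpa using prod_Icc_eq_poch (β/2) (Nat.zero_le N)
  have hpb : ∏ l ∈ Icc 1 N, b l = poch (β/2 - N) (2 * N) := by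
    have h := prod_Icc_eq_poch (β/2 - 1) (Nat.zero_le N)
    simp only [zero_add, Nat.cast_zero, add_zero, Nat.sub_zero] at h
    convert h using 3 <;> ring
  calc Lbar x z β t N
      = ∏ l ∈ Icc 1 N, (a l • x + (a l * b l * t) • (1 : A))
          + (∏ l ∈ Icc 1 N, (b l • z + (a l * b l * t) • (1 : A))
            - ∏ l ∈ Icc 1 N, (a l * b l * t) • (1 : A)) := by
        have hx : ∀ l, a l • x + (a l * b l * t) • (1 : A) = a l • (x + (b l * t) • 1) :=
          fun l => by rw [smul_add, smul_smul, mul_assoc]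
        have hc : ∀ l, (a l * b l * t) • (1 : A) = b l • ((a l * t) • 1) :=
          fun l => by rw [smul_smul]; congr 1; ring
        simp_rw [hx, hc, ← smul_add]
        rw [prod_smul, prod_smul, prod_smul, ← smul_sub, hpa, hpb, Lbar]
        congr 2
        exacts [Ppoly_eq_prod_reflect x β t N, (prod_sub_prod_eq_Qpoly z β t N).symm]
    _ = ∏ l ∈ Icc 1 N, (a l • x + b l • z + (a l * b l * t) • (1 : A)) :=
        (prod_add_add_of_mul_eq_zero _ _ huv).symm
    _ = _ := prod_congr rfl fun l _ => by congr 2; ring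

/-- factorization of the normalized Branson–Gover element into second-order factors. -/
theorem Lbar_factorization {A : Type*} [CommRing A] [Algebra ℂ A] (x z : A) (hxz : x * z = 0)
    (β t : ℂ) (N : ℕ) (hN : 1 ≤ N) :
    Lbar x z β t N =
      ∏ l ∈ Finset.Icc 1 N,
        (((β/2 + (N:ℂ) - (l:ℂ) + 1)*(β/2 - (N:ℂ) + (l:ℂ))) • x
          + ((β/2 + (N:ℂ) - (l:ℂ))*(β/2 - (N:ℂ) + (l:ℂ) - 1)) • z
          + ((β/2 - (N:ℂ) + (l:ℂ) - 1)*(β/2 - (N:ℂ) + (l:ℂ))*(β/2 + (N:ℂ) - (l:ℂ))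
              *(β/2 + (N:ℂ) - (l:ℂ) + 1)*t) • (1 : A)) :=
  Lbar_factorization_general x z hxz β t N
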